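/- For the map g(z) = a·z^ν + αμ with a > 0, α > 0, ν > 1 and μ > 0 sufficiently small, the fixed point z*(μ) satisfies z*(μ) = αμ + O(μ^ν) as μ → 0⁺; more precisely, there exist C > 0 and μ₀ > 0 such that |z*(μ) − αμ| ≤ C·μ^ν for all 0 < μ < μ₀. -/

import Mathlib

/-- For g(z) = a·z^ν + αμ with a > 0, α > 0, ν > 1, the smallest positive
fixed point z*(μ) exists for small μ > 0 and satisfies
|z*(μ) − αμ| ≤ C·μ^ν for some constant C > 0, i.e. z*(μ) = αμ + O(μ^ν). -/
theorem stmt_8 (a α ν : ℝ) (ha : 0 < a) (hα : 0 < α) (hν : 1 < ν) :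
    ∃ C : ℝ, 0 < C ∧ ∃ μ₀ : ℝ, 0 < μ₀ ∧ ∀ μ : ℝ, 0 < μ → μ < μ₀ →
      ∃ z : ℝ, IsLeast {w : ℝ | 0 < w ∧ a * w ^ ν + α * μ = w} z ∧
        |z - α * μ| ≤ C * μ ^ ν := by
  have hν0 : (0:ℝ) ≤ ν := le_of_lt (lt_trans one_pos hν)
  have h2α : (0:ℝ) < 2 * α := by linarith
  set K : ℝ := a * (2 * α) ^ ν / α with hKdef
  have h2αν : (0:ℝ) < (2 * α) ^ ν := Real.rpow_pos_of_pos h2α ν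
  have hK : 0 < K := by positivity
  have hν1 : (0:ℝ) < ν - 1 := by linarith
  set μ₀ : ℝ := min 1 ((1 / K) ^ (1 / (ν - 1))) with hμ₀def
  have hμ₀pos : 0 < μ₀ := lt_min one_pos (Real.rpow_pos_of_pos (by positivity) _)
  refine ⟨a * (2 * α) ^ ν, by positivity, μ₀, hμ₀pos, ?_⟩
  intro μ hμ hμlt
  have hμ1 : μ ≤ 1 := le_of_lt (lt_of_lt_of_le hμlt (min_le_left _ _))
  have hμK : μ ≤ (1 / K) ^ (1 / (ν - 1)) :=
    le_of_lt (lt_of_lt_of_le hμlt (min_le_right _ _))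
  -- key smallness: a * (2*α*μ)^ν ≤ α * μ
  have hkey : a * (2 * α * μ) ^ ν ≤ α * μ := by
    have hμν1 : μ ^ (ν - 1) ≤ 1 / K := by
      calc μ ^ (ν - 1) ≤ ((1 / K) ^ (1 / (ν - 1))) ^ (ν - 1) :=
            Real.rpow_le_rpow (le_of_lt hμ) hμK (le_of_lt hν1)
        _ = (1 / K) ^ (1 / (ν - 1) * (ν - 1)) := by
            rw [← Real.rpow_mul (by positivity)]
        _ = 1 / K := by
            rw [one_div_mul_cancel (ne_of_gt hν1), Real.rpow_one]
    have hsplit : (2 * α * μ) ^ ν = (2 * α) ^ ν * (μ * μ ^ (ν - 1)) := by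
      rw [Real.mul_rpow (le_of_lt h2α) (le_of_lt hμ)]
      congr 1
      rw [← Real.rpow_one_add' (le_of_lt hμ) (by linarith)]
      ring_nf
    rw [hsplit]
    have : a * ((2 * α) ^ ν * (μ * μ ^ (ν - 1))) = (a * (2 * α) ^ ν * μ ^ (ν - 1)) * μ := by
      ring
    rw [this]
    have hμν1' : a * (2 * α) ^ ν * μ ^ (ν - 1) ≤ α := by
      have := mul_le_mul_of_nonneg_left hμν1 (le_of_lt (by positivity : (0:ℝ) < a * (2 * α) ^ ν))
      calc a * (2 * α) ^ ν * μ ^ (ν - 1) ≤ a * (2 * α) ^ ν * (1 / K) := this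
        _ = α := by field_simp [hKdef]; rw [hKdef]; field_simp
    exact mul_le_mul_of_nonneg_right hμν1' (le_of_lt hμ)
  have hαμ : 0 < α * μ := by positivity
  -- continuity of the fixed-point map
  have hcont : Continuous fun w : ℝ => a * w ^ ν + α * μ - w := by
    have h1 : Continuous fun w : ℝ => w ^ ν := by
      rw [continuous_iff_continuousAt]
      intro x
      exact Real.continuousAt_rpow_const x ν (Or.inr hν0)
    continuity
  -- the set S
  set S : Set ℝ := {w : ℝ | 0 < w ∧ a * w ^ ν + α * μ = w} with hSdef
  have hSsub : S = Set.Ici (α * μ) ∩ (fun w : ℝ => a * w ^ ν + α * μ - w) ⁻¹' {0} := by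
    ext w
    simp only [hSdef, Set.mem_setOf_eq, Set.mem_inter_iff, Set.mem_Ici, Set.mem_preimage,
      Set.mem_singleton_iff]
    constructor
    · rintro ⟨hw0, hwfix⟩
      have : a * w ^ ν ≥ 0 := by positivity
      constructor
      · linarith
      · linarith
    · rintro ⟨hw1, hw2⟩
      exact ⟨lt_of_lt_of_le hαμ hw1, by linarith⟩
  have hSclosed : IsClosed S := by
    rw [hSsub]
    exact IsClosed.inter isClosed_Ici (isClosed_singleton.preimage hcont)
  -- existence of a fixed point in [αμ, 2αμ] via IVT on f w = w - a * w^ν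
  have hle : α * μ ≤ 2 * α * μ := by nlinarith
  have hIVT := intermediate_value_Icc hle
    (f := fun w : ℝ => w - a * w ^ ν) (by
      have : Continuous fun w : ℝ => w - a * w ^ ν := by
        have h1 : Continuous fun w : ℝ => w ^ ν := by
          rw [continuous_iff_continuousAt]
          intro x
          exact Real.continuousAt_rpow_const x ν (Or.inr hν0)
        continuity
      exact this.continuousOn)
  have hmem : α * μ ∈ Set.Icc (α * μ - a * (α * μ) ^ ν) (2 * α * μ - a * (2 * α * μ) ^ ν) := by
    constructor
    · have : (0:ℝ) < a * (α * μ) ^ ν := by positivity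
      linarith
    · linarith
  obtain ⟨z₀, hz₀mem, hz₀fix⟩ := hIVT hmem
  simp only at hz₀fix
  have hz₀S : z₀ ∈ S := by
    rw [hSdef]
    refine ⟨lt_of_lt_of_le hαμ hz₀mem.1, by linarith⟩
  have hSne : S.Nonempty := ⟨z₀, hz₀S⟩
  have hSbdd : BddBelow S := ⟨α * μ, fun w hw => by
    rw [hSsub] at hw; exact hw.1⟩
  refine ⟨sInf S, ⟨hSclosed.csInf_mem hSne hSbdd, fun w hw => csInf_le hSbdd hw⟩, ?_⟩
  have hzS : sInf S ∈ S := hSclosed.csInf_mem hSne hSbdd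
  obtain ⟨hz0, hzfix⟩ := hzS
  have hzge : α * μ ≤ sInf S := by
    have : (0:ℝ) ≤ a * (sInf S) ^ ν := by positivity
    linarith
  have hzle : sInf S ≤ 2 * α * μ := le_trans (csInf_le hSbdd hz₀S) hz₀mem.2
  rw [abs_of_nonneg (by linarith)]
  have hbound : a * (sInf S) ^ ν ≤ a * (2 * α * μ) ^ ν :=
    mul_le_mul_of_nonneg_left (Real.rpow_le_rpow (le_of_lt hz0) hzle hν0) (le_of_lt ha)
  have hfinal : (2 * α * μ) ^ ν = (2 * α) ^ ν * μ ^ ν :=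
    Real.mul_rpow (le_of_lt h2α) (le_of_lt hμ)
  nlinarith [hbound, hfinal]
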